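/- Let Λ ⊆ P₁(ℝ^d) be a tight family consisting of measures equivalent to Lebesgue measure, and for β ∈ Λ let ∇v_β denote the Brenier map from β to ν. Under Assumption (A), for every δ > 0 there exists a constant M = M(ν, Λ, δ) > 0 such that for every z ∈ ℝ^d with |z| ≥ M and every β ∈ Λ, one has ∇v_β(z) ∈ S_{z/|z|, δ}. -/

import Mathlib

/-!
A Brenier map is the gradient of a convex potential `v`, so `∇v` is monotone:
`⟪∇v z - ∇v x, z - x⟫ ≥ 0`. Since `∇v x ∈ C` for `β`-a.e. `x` and `β` charges every ball,
comparing `∇v z` with such gradients at points far out in a direction `u` gives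
`⟪∇v z, u⟫ ≤ ℓ(u)` for all `u`, hence `∇v z ∈ C`. By compactness of the sphere, the slices
`S_{a,δ/2}` have `ν`-mass at least some `ε > 0` uniformly in the unit vector `a`; by tightness
of `Λ` there is a compact `K` with `β Kᶜ < ε`, so some `x ∈ K` has `∇v x ∈ S_{a,δ/2}`.
Monotonicity against this `x`, with `z = ‖z‖ • a`, yields `⟪∇v z, a⟫ > ℓ(a) - δ` as soon as
`‖z‖ δ ≥ 4 R r`, where `R` bounds `C` and `r` bounds `K`.
-/

open MeasureTheory ProbabilityTheory Filter Set
open scoped ENNReal InnerProductSpace Topology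

noncomputable section

abbrev Ed (d : ℕ) : Type := EuclideanSpace ℝ (Fin d)

section Defs

variable {E : Type*} [NormedAddCommGroup E] [InnerProductSpace ℝ E] [CompleteSpace E]
  [MeasurableSpace E] [BorelSpace E] [SecondCountableTopology E]
variable {Ω : Type*} [MeasurableSpace Ω]

/-- The (topological) support of a measure. -/
def msupport (ρ : Measure E) : Set E :=
  {x | ∀ U : Set E, IsOpen U → x ∈ U → 0 < ρ U}

/-- `ρ` has a finite second moment, i.e. `ρ ∈ 𝒫₂`. -/
def FiniteSecondMoment (ρ : Measure E) : Prop :=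
  ∫⁻ x, (‖x‖₊ : ℝ≥0∞) ^ 2 ∂ρ < ⊤

/-- `ρ` has a finite first moment, i.e. `ρ ∈ 𝒫₁`. -/
def FiniteFirstMoment (ρ : Measure E) : Prop :=
  ∫⁻ x, (‖x‖₊ : ℝ≥0∞) ∂ρ < ⊤

/-- Convex order `μ ≤_cx ν`: `∫ φ dμ ≤ ∫ φ dν` for all (integrable) convex `φ`. -/
def ConvexOrder (μ ν : Measure E) : Prop :=
  ∀ φ : E → ℝ, ConvexOn ℝ Set.univ φ → Integrable φ μ → Integrable φ ν →
    ∫ x, φ x ∂μ ≤ ∫ x, φ x ∂ν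

/-- There is a martingale `(M_t)_{0 ≤ t ≤ 1}` with `M_0 ∼ μ`, `M_1 ∼ ν` and
`P(M_0 ∈ A, M_1 ∈ B) > 0`. -/
def ExistsMartingaleHitting (μ ν : Measure E) (A B : Set E) : Prop :=
  ∃ (Ω' : Type) (mΩ' : MeasurableSpace Ω'),
    letI : MeasurableSpace Ω' := mΩ'
    ∃ (P' : Measure Ω') (ℱ : Filtration ℝ mΩ') (M : ℝ → Ω' → E),
      IsProbabilityMeasure P' ∧ Martingale M ℱ P' ∧
      P'.map (M 0) = μ ∧ P'.map (M 1) = ν ∧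
      0 < P' {ω | M 0 ω ∈ A ∧ M 1 ω ∈ B}

/-- The pair `(μ, ν)` is irreducible. -/
def IrreduciblePair (μ ν : Measure E) : Prop :=
  ∀ A B : Set E, MeasurableSet A → MeasurableSet B → 0 < μ A → 0 < ν B →
    ExistsMartingaleHitting μ ν A B

/-- Assumption (A): convex order, irreducibility, `C := conv(supp ν)` compact,
and `supp μ` contained in the interior of `C`. -/
structure AssumptionA (μ ν : Measure E) : Prop where
  cx : ConvexOrder μ ν
  irr : IrreduciblePair μ ν
  cptC : IsCompact (convexHull ℝ (msupport ν))
  suppInt : msupport μ ⊆ interior (convexHull ℝ (msupport ν))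

/-- Maximal covariance `MCov(p₁, p₂) = sup_{q ∈ Cpl(p₁,p₂)} ∫ ⟨x₁, x₂⟩ q(dx₁,dx₂)`. -/
def MCov (p₁ p₂ : Measure E) : ℝ :=
  ⨆ q : {q : Measure (E × E) // q.map Prod.fst = p₁ ∧ q.map Prod.snd = p₂},
    ∫ x : E × E, ⟪x.1, x.2⟫_ℝ ∂(q.1)

/-- Convolution of the measure `α` with the measure `γ`. -/
def mconvol (α γ : Measure E) : Measure E :=
  (α.prod γ).map fun p => p.1 + p.2

/-- The Bass functional `𝒱(α) = MCov(α ∗ γ, ν) − MCov(α, μ)`. -/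
def calV (γ μ ν : Measure E) (α : Measure E) : ℝ :=
  MCov (mconvol α γ) ν - MCov α μ

/-- The sigma-algebra generated by a random variable. -/
def sigmaGen {F : Type*} [MeasurableSpace F] (X : Ω → F) : MeasurableSpace Ω :=
  MeasurableSpace.comap X inferInstance

/-- `Z ∈ L²(m)`: `m`-measurable and square-integrable. -/
def MemL2Meas {Ω' : Type*} {mΩ' : MeasurableSpace Ω'} (P : @Measure Ω' mΩ')
    (m : MeasurableSpace Ω') (Z : Ω' → E) : Prop :=
  Measurable[m] Z ∧ MemLp Z 2 P

/-- The lifted Bass functional `V(Z) = sup { E[(Z+Γ)·Y − Z·X] : Y ∈ L²(ℋ), Y ∼ ν }`,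
where `ℋ = σ(X, Γ)`. -/
def bassV (P : Measure Ω) (ν : Measure E) (X Γ : Ω → E) (Z : Ω → E) : ℝ :=
  ⨆ Y : {Y : Ω → E // Measurable[sigmaGen X ⊔ sigmaGen Γ] Y ∧ MemLp Y 2 P ∧ P.map Y = ν},
    ∫ ω, (⟪Z ω + Γ ω, Y.1 ω⟫_ℝ - ⟪Z ω, X ω⟫_ℝ) ∂P

/-- `T` is the Brenier map from `ρ` to `η`: an a.e. gradient of a convex function pushing
`ρ` forward to `η`. -/
def IsBrenierMap (ρ η : Measure E) (T : E → E) : Prop :=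
  Measurable T ∧ ρ.map T = η ∧
    ∃ v : E → ℝ, ConvexOn ℝ Set.univ v ∧ ∀ᵐ x ∂ρ, HasGradientAt v (T x) x

/-- Convolution `(f ∗ γ)(z) = ∫ f (z + y) γ(dy)` of a map with a measure. -/
def gconv (γ : Measure E) (f : E → E) (z : E) : E :=
  ∫ y, f (z + y) ∂γ

/-- The standing probabilistic setup: `P` a probability measure carrying independent
random variables `X ∼ μ` and `Γ ∼ γ`, with `μ, ν ∈ 𝒫₂`. -/
structure BassSetup (P : Measure Ω) (γ μ ν : Measure E) (X Γ : Ω → E) : Prop where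
  prob : IsProbabilityMeasure P
  probν : IsProbabilityMeasure ν
  fin2ν : FiniteSecondMoment ν
  measX : Measurable X
  measΓ : Measurable Γ
  indep : IndepFun X Γ P
  lawX : P.map X = μ
  lawΓ : P.map Γ = γ
  l2X : MemLp X 2 P

/-- `(X, Z)` is coupled monotonically: `E[⟨X, Z⟩] = MCov(law X, law Z)`. -/
def MonotoneCoupled (P : Measure Ω) (X Z : Ω → E) : Prop :=
  ∫ ω, ⟪X ω, Z ω⟫_ℝ ∂P = MCov (P.map X) (P.map Z)

/-- The `L²`-Bass gradient flow: an absolutely continuous curve `(ζ_t)_{t ≥ 0}` of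
`σ(X)`-measurable elements of `L²` satisfying, for a.e. `t ≥ 0`,
`dζ_t/dt = −((∇v_t ∗ γ)(ζ_t) − X)`, where `∇v_t` is the Brenier map from
`law(ζ_t) ∗ γ = law(ζ_t + Γ)` to `ν`. -/
def IsBassGradientFlow (P : Measure Ω) (γ ν : Measure E) (X Γ : Ω → E)
    (ζ : ℝ → Lp E 2 P) : Prop :=
  (∀ t : ℝ, 0 ≤ t → AEStronglyMeasurable[sigmaGen X] (ζ t : Ω → E) P) ∧
  ∃ g : ℝ → Lp E 2 P,
    (∀ t : ℝ, 0 ≤ t → ζ t = ζ 0 + ∫ s in (0:ℝ)..t, g s) ∧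
    ∀ᵐ t ∂(volume.restrict (Set.Ioi (0:ℝ))),
      ∃ T : E → E,
        IsBrenierMap (P.map fun ω => (ζ t : Ω → E) ω + Γ ω) ν T ∧
        (g t : Ω → E) =ᵐ[P] fun ω => X ω - gconv γ T ((ζ t : Ω → E) ω)

/-- `Z` minimizes the lifted Bass functional over `L²(σ(X))`. -/
def IsMinimizerV (P : Measure Ω) (ν : Measure E) (X Γ : Ω → E) (Z : Ω → E) : Prop :=
  ∀ W : Ω → E, MemL2Meas P (sigmaGen X) W → bassV P ν X Γ Z ≤ bassV P ν X Γ W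

/-- The support function `ℓ(a) = sup { ⟨y, a⟩ : y ∈ C }` of a set `C`. -/
def suppFn (C : Set E) (a : E) : ℝ := sSup ((fun y => ⟪y, a⟫_ℝ) '' C)

/-- The `δ`-slice `S_{a,δ} = { y ∈ C : ⟨y, a⟩ > ℓ(a) − δ }`. -/
def mslice (C : Set E) (a : E) (δ : ℝ) : Set E :=
  {y ∈ C | suppFn C a - δ < ⟪y, a⟫_ℝ}

/-- `Δ = inf { ℓ(a) − ⟨x, a⟩ : a ∈ S^{d−1}, x ∈ C_μ }`. -/
def bassDelta (μ ν : Measure E) : ℝ :=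
  sInf {r : ℝ | ∃ a : E, ‖a‖ = 1 ∧ ∃ x ∈ convexHull ℝ (msupport μ),
    r = suppFn (convexHull ℝ (msupport ν)) a - ⟪x, a⟫_ℝ}

/-- A tight family of measures. -/
def TightFamily (Λ : Set (Measure E)) : Prop :=
  ∀ ε : ℝ≥0∞, 0 < ε → ∃ K : Set E, IsCompact K ∧ ∀ β ∈ Λ, β Kᶜ ≤ ε

end Defs

/-- The standard Gaussian measure on `ℝ^d`. -/
def stdGaussian (d : ℕ) : Measure (Ed d) :=
  (Measure.pi fun _ : Fin d => gaussianReal 0 1).map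
    (MeasurableEquiv.toLp 2 (Fin d → ℝ))

/-- Assumptions (A4)-(A5): `ν` is absolutely continuous with a density which is essentially
bounded away from `0` on `I = int C` and essentially bounded from above on `ℝ`. -/
def NuDensityBounds (ν : Measure ℝ) : Prop :=
  ∃ f : ℝ → ℝ, Measurable f ∧ ν = volume.withDensity (fun x => ENNReal.ofReal (f x)) ∧
    (∃ c : ℝ, 0 < c ∧ ∀ᵐ x ∂(volume : Measure ℝ),
        x ∈ interior (convexHull ℝ (msupport ν)) → c ≤ f x) ∧
    (∃ Cb : ℝ, ∀ᵐ x ∂(volume : Measure ℝ), f x ≤ Cb)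

section ConvexGradient

variable {E : Type*} [NormedAddCommGroup E] [InnerProductSpace ℝ E] [CompleteSpace E]
  {v : E → ℝ}

theorem ConvexOn.inner_gradient_le_sub (hv : ConvexOn ℝ univ v) {g z : E}
    (h : HasGradientAt v g z) (y : E) : ⟪g, y - z⟫_ℝ ≤ v y - v z := by
  have hline : HasDerivAt (v ∘ AffineMap.lineMap (k := ℝ) z y) ⟪g, y - z⟫_ℝ 0 := by
    simpa using h.hasFDerivAt.comp_hasDerivAt_of_eq (0 : ℝ) AffineMap.hasDerivAt_lineMap
      (AffineMap.lineMap_apply_zero z y).symm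
  simpa [slope] using (hv.comp_affineMap (AffineMap.lineMap z y)).le_slope_of_hasDerivAt
    (mem_univ 0) (mem_univ 1) zero_lt_one hline

theorem ConvexOn.inner_gradient_sub_nonneg (hv : ConvexOn ℝ univ v) {g₁ g₂ x₁ x₂ : E}
    (h₁ : HasGradientAt v g₁ x₁) (h₂ : HasGradientAt v g₂ x₂) :
    0 ≤ ⟪g₁ - g₂, x₁ - x₂⟫_ℝ := by
  have h₁₂ := hv.inner_gradient_le_sub h₁ x₂
  have h₂₁ := hv.inner_gradient_le_sub h₂ x₁
  rw [← neg_sub x₁ x₂, inner_neg_right] at h₁₂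
  rw [inner_sub_left]
  linarith

end ConvexGradient

section SupportFunction

variable {E : Type*} [NormedAddCommGroup E] [InnerProductSpace ℝ E] {C : Set E} {R : ℝ}

theorem le_suppFn (hR : ∀ y ∈ C, ‖y‖ ≤ R) {y : E} (hy : y ∈ C) (a : E) :
    ⟪y, a⟫_ℝ ≤ suppFn C a := by
  refine le_csSup ⟨R * ‖a‖, ?_⟩ (mem_image_of_mem _ hy)
  rintro _ ⟨w, hw, rfl⟩
  exact (real_inner_le_norm w a).trans (mul_le_mul_of_nonneg_right (hR w hw) (norm_nonneg a))

theorem suppFn_le (hne : C.Nonempty) {a : E} {r : ℝ} (h : ∀ y ∈ C, ⟪y, a⟫_ℝ ≤ r) :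
    suppFn C a ≤ r :=
  csSup_le (hne.image _) (forall_mem_image.2 h)

theorem suppFn_le_add_mul_norm_sub (hne : C.Nonempty) (hR : ∀ y ∈ C, ‖y‖ ≤ R) (a b : E) :
    suppFn C a ≤ suppFn C b + R * ‖a - b‖ := by
  refine suppFn_le hne fun y hy => ?_
  have hab : ⟪y, a - b⟫_ℝ ≤ R * ‖a - b‖ :=
    (real_inner_le_norm y _).trans (mul_le_mul_of_nonneg_right (hR y hy) (norm_nonneg _))
  have hb := le_suppFn hR hy b
  rw [inner_sub_right] at hab
  linarith

theorem exists_inner_gt_of_lt_suppFn_convexHull {s : Set E} (hne : s.Nonempty)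
    {a : E} {r : ℝ} (hr : r < suppFn (convexHull ℝ s) a) : ∃ y ∈ s, r < ⟪y, a⟫_ℝ := by
  obtain ⟨_, ⟨w, hw, rfl⟩, hrw⟩ :=
    exists_lt_of_lt_csSup ((hne.mono (subset_convexHull ℝ s)).image _) hr
  have hlin : ConvexOn ℝ univ fun y : E => ⟪y, a⟫_ℝ := by
    simpa [real_inner_comm] using (innerSL ℝ a).toLinearMap.convexOn convex_univ
  obtain ⟨y, hy, hwy⟩ := hlin.exists_ge_of_mem_convexHull (subset_univ s) hw
  exact ⟨y, hy, hrw.trans_le hwy⟩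

theorem mem_of_forall_inner_le_suppFn [CompleteSpace E] (hconv : Convex ℝ C)
    (hclosed : IsClosed C) (hne : C.Nonempty) {g : E} (h : ∀ u, ⟪g, u⟫_ℝ ≤ suppFn C u) :
    g ∈ C := by
  by_contra hg
  obtain ⟨f, s, hfC, hfg⟩ := geometric_hahn_banach_closed_point hconv hclosed hg
  set b := (InnerProductSpace.toDual ℝ E).symm f
  have hf : ∀ w, f w = ⟪w, b⟫_ℝ := fun w => by
    rw [real_inner_comm, InnerProductSpace.toDual_symm_apply]
  have hb : suppFn C b ≤ s := suppFn_le hne fun y hy => (hf y ▸ hfC y hy).le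
  linarith [h b, hf g]

end SupportFunction

section GradientRange

variable {E : Type*} [NormedAddCommGroup E] [InnerProductSpace ℝ E] [CompleteSpace E]
  {v : E → ℝ} {C : Set E} {R : ℝ}

/-- Compare `g` with a gradient `g' ∈ C` taken within distance `1` of `z + t • u`. -/
theorem ConvexOn.mul_inner_sub_suppFn_le (hv : ConvexOn ℝ univ v) (hR : ∀ y ∈ C, ‖y‖ ≤ R)
    (hdense : Dense {x | ∃ g ∈ C, HasGradientAt v g x}) {g z : E}
    (hg : HasGradientAt v g z) (u : E) {t : ℝ} (ht : 0 < t) :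
    t * (⟪g, u⟫_ℝ - suppFn C u) ≤ ‖g‖ + R := by
  obtain ⟨x, ⟨g', hg'C, hg'⟩, hx⟩ :=
    hdense.exists_mem_open Metric.isOpen_ball (Metric.nonempty_ball (x := z + t • u).2 one_pos)
  set e := x - z - t • u
  have he : ‖e‖ < 1 := by
    rw [Metric.mem_ball, dist_eq_norm] at hx
    simpa [e, sub_sub] using hx
  have hmono := hv.inner_gradient_sub_nonneg hg hg'
  have hxz : z - x = -(t • u + e) := by simp only [e]; abel
  rw [hxz, inner_neg_right, inner_add_right, real_inner_smul_right, inner_sub_left] at hmono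
  have he' : -(‖g‖ + R) ≤ ⟪g - g', e⟫_ℝ := by
    have hnorm : ‖g - g'‖ * ‖e‖ ≤ ‖g‖ + R :=
      calc ‖g - g'‖ * ‖e‖ ≤ ‖g - g'‖ := mul_le_of_le_one_right (norm_nonneg _) he.le
        _ ≤ ‖g‖ + R := (norm_sub_le g g').trans (by gcongr; exact hR g' hg'C)
    linarith [neg_le_of_abs_le (abs_real_inner_le_norm (g - g') e)]
  have hg'u := mul_le_mul_of_nonneg_left (le_suppFn hR hg'C u) ht.le
  linarith

theorem ConvexOn.gradient_mem_of_dense (hv : ConvexOn ℝ univ v) (hconv : Convex ℝ C)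
    (hclosed : IsClosed C) (hR : ∀ y ∈ C, ‖y‖ ≤ R)
    (hdense : Dense {x | ∃ g ∈ C, HasGradientAt v g x}) {g z : E}
    (hg : HasGradientAt v g z) : g ∈ C := by
  obtain ⟨-, ⟨g₀, hg₀, -⟩, -⟩ := hdense.exists_mem_open isOpen_univ ⟨z, mem_univ z⟩
  have hR₀ : 0 ≤ R := (norm_nonneg g₀).trans (hR g₀ hg₀)
  refine mem_of_forall_inner_le_suppFn hconv hclosed ⟨g₀, hg₀⟩ fun u => ?_
  by_contra! hlt
  have hpos : 0 < ⟪g, u⟫_ℝ - suppFn C u := sub_pos.2 hlt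
  have := hv.mul_inner_sub_suppFn_le hR hdense hg u
    (t := (‖g‖ + R + 1) / (⟪g, u⟫_ℝ - suppFn C u)) (by positivity)
  rw [div_mul_cancel₀ _ hpos.ne'] at this
  linarith

end GradientRange

theorem IsCompact.exists_pos_forall_le {X : Type*} [TopologicalSpace X] {s : Set X}
    (hs : IsCompact s) {f : X → ℝ≥0∞} (hf : ∀ x ∈ s, ∃ ε > 0, ∀ᶠ y in 𝓝[s] x, ε ≤ f y) :
    ∃ ε > 0, ∀ x ∈ s, ε ≤ f x := by
  refine hs.induction_on (p := fun t => ∃ ε > 0, ∀ x ∈ t, ε ≤ f x) ⟨1, one_pos, by simp⟩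
    (fun _ _ hsub ⟨ε, hε, hle⟩ => ⟨ε, hε, fun x hx => hle x (hsub hx)⟩)
    (fun _ _ ⟨ε₁, hε₁, hle₁⟩ ⟨ε₂, hε₂, hle₂⟩ => ⟨min ε₁ ε₂, lt_min hε₁ hε₂, ?_⟩)
    fun x hx => ?_
  · rintro x (hx | hx)
    exacts [(min_le_left _ _).trans (hle₁ x hx), (min_le_right _ _).trans (hle₂ x hx)]
  · obtain ⟨ε, hε, hev⟩ := hf x hx
    exact ⟨_, hev, ε, hε, fun y hy => hy⟩

theorem exists_mem_inter_of_measure_compl_lt {α : Type*} [MeasurableSpace α] {β : Measure α}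
    {A K : Set α} {p : α → Prop} (hp : ∀ᵐ x ∂β, p x) (h : β Kᶜ < β A) : ∃ x ∈ A ∩ K, p x := by
  by_contra! hcon
  have hsub : A ∩ {x | p x} ⊆ Kᶜ := fun x ⟨hxA, hx⟩ hxK => hcon x ⟨hxA, hxK⟩ hx
  rw [← measure_inter_conull (s := A) (t := {x | p x}) (ae_iff.1 hp)] at h
  exact (measure_mono hsub).not_gt h

section Measures

variable {E : Type*} [NormedAddCommGroup E] [MeasurableSpace E]

theorem msupport_eq_support (ρ : Measure E) : msupport ρ = ρ.support := by
  rw [Measure.support_eq_forall_isOpen]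
  ext x
  exact ⟨fun h U hxU hU => h U hU hxU, fun h U hU hxU => h U hxU hU⟩

theorem TightFamily.exists_isCompact_measure_compl_lt {Λ : Set (Measure E)}
    (h : TightFamily Λ) {ε : ℝ≥0∞} (hε : 0 < ε) :
    ∃ K, IsCompact K ∧ ∀ β ∈ Λ, β Kᶜ < ε := by
  have hε₁ : 0 < min ε 1 := lt_min hε one_pos
  obtain ⟨K, hK, hKε⟩ := h (min ε 1 / 2) (ENNReal.half_pos hε₁.ne')
  have hlt : min ε 1 / 2 < ε := (ENNReal.half_lt_self hε₁.ne'
    ((min_le_right ε 1).trans_lt ENNReal.one_lt_top).ne).trans_le (min_le_left ε 1)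
  exact ⟨K, hK, fun β hβ => (hKε β hβ).trans_lt hlt⟩

end Measures

section Slices

variable {E : Type*} [NormedAddCommGroup E] [InnerProductSpace ℝ E] {C : Set E} {R δ : ℝ}

theorem ball_inter_subset_mslice (hR : ∀ y ∈ C, ‖y‖ ≤ R) {a a' y : E} (ha : ‖a‖ = 1)
    (hy : suppFn C a - δ / 4 < ⟪y, a⟫_ℝ) (ha' : R * ‖a' - a‖ < δ / 4) :
    Metric.ball y (δ / 4) ∩ C ⊆ mslice C a' δ := by
  rintro w ⟨hwy, hwC⟩
  refine ⟨hwC, ?_⟩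
  have hwya : -(δ / 4) ≤ ⟪w - y, a⟫_ℝ := by
    have := neg_le_of_abs_le (abs_real_inner_le_norm (w - y) a)
    rw [Metric.mem_ball, dist_eq_norm] at hwy
    rw [ha, mul_one] at this
    linarith
  have hwa' : -(R * ‖a' - a‖) ≤ ⟪w, a' - a⟫_ℝ := by
    have := neg_le_of_abs_le (abs_real_inner_le_norm w (a' - a))
    have := mul_le_mul_of_nonneg_right (hR w hwC) (norm_nonneg (a' - a))
    linarith
  have hlip := suppFn_le_add_mul_norm_sub ⟨w, hwC⟩ hR a' a
  rw [inner_sub_left] at hwya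
  rw [inner_sub_right] at hwa'
  linarith

theorem IsClosed.measurableSet_mslice [MeasurableSpace E] [OpensMeasurableSpace E]
    (hC : IsClosed C) (a : E) (δ : ℝ) : MeasurableSet (mslice C a δ) :=
  hC.measurableSet.inter <| IsOpen.measurableSet <|
    isOpen_lt (g := fun y => ⟪y, a⟫_ℝ) continuous_const (continuous_id.inner continuous_const)

theorem exists_pos_le_measure_mslice [MeasurableSpace E] [ProperSpace E] {ν : Measure E}
    (hne : (msupport ν).Nonempty) (hR : ∀ y ∈ convexHull ℝ (msupport ν), ‖y‖ ≤ R)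
    (hnull : ν (convexHull ℝ (msupport ν))ᶜ = 0) (hδ : 0 < δ) :
    ∃ ε > 0, ∀ a : E, ‖a‖ = 1 → ε ≤ ν (mslice (convexHull ℝ (msupport ν)) a δ) := by
  set C := convexHull ℝ (msupport ν)
  suffices h : ∀ a ∈ Metric.sphere (0 : E) 1,
      ∃ ε > 0, ∀ᶠ a' in 𝓝[Metric.sphere 0 1] a, ε ≤ ν (mslice C a' δ) by
    obtain ⟨ε, hε, hle⟩ := (isCompact_sphere (0 : E) 1).exists_pos_forall_le h
    exact ⟨ε, hε, fun a ha => hle a (mem_sphere_zero_iff_norm.2 ha)⟩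
  intro a ha
  obtain ⟨y, hy, hya⟩ := exists_inner_gt_of_lt_suppFn_convexHull hne
    (sub_lt_self (suppFn C a) (by positivity : 0 < δ / 4))
  have hnear : ∀ᶠ a' in 𝓝 a, R * ‖a' - a‖ < δ / 4 := by
    have : Tendsto (fun a' => R * ‖a' - a‖) (𝓝 a) (𝓝 (R * 0)) :=
      (tendsto_iff_norm_sub_tendsto_zero.1 tendsto_id).const_mul R
    exact this.eventually (gt_mem_nhds (by rw [mul_zero]; positivity))
  refine ⟨ν (Metric.ball y (δ / 4)), hy _ Metric.isOpen_ball (Metric.mem_ball_self (by positivity)),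
    ?_⟩
  filter_upwards [nhdsWithin_le_nhds hnear] with a' ha'
  calc ν (Metric.ball y (δ / 4)) = ν (Metric.ball y (δ / 4) ∩ C) :=
        (measure_inter_conull hnull).symm
    _ ≤ ν (mslice C a' δ) :=
        measure_mono (ball_inter_subset_mslice hR (mem_sphere_zero_iff_norm.1 ha) hya ha')

end Slices

theorem ConvexOn.sub_lt_inner_gradient_of_far {E : Type*} [NormedAddCommGroup E]
    [InnerProductSpace ℝ E] [CompleteSpace E] {v : E → ℝ} (hv : ConvexOn ℝ univ v)
    {a x gx gz : E} {c t r R δ : ℝ} (hgz : HasGradientAt v gz (t • a))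
    (hgx : HasGradientAt v gx x) (hgzR : ‖gz‖ ≤ R) (hgxR : ‖gx‖ ≤ R) (hxr : ‖x‖ ≤ r)
    (ht : 0 < t) (hfar : 4 * R * r ≤ δ * t) (hgxa : c - δ / 2 < ⟪gx, a⟫_ℝ) :
    c - δ < ⟪gz, a⟫_ℝ := by
  have hmono := hv.inner_gradient_sub_nonneg hgz hgx
  rw [inner_sub_right, real_inner_smul_right, inner_sub_left] at hmono
  have hcross : -(2 * R * r) ≤ ⟪gz - gx, x⟫_ℝ := by
    have hnorm : ‖gz - gx‖ * ‖x‖ ≤ (R + R) * r := by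
      gcongr
      · linarith [norm_nonneg gz]
      · exact (norm_sub_le _ _).trans (add_le_add hgzR hgxR)
    linarith [neg_le_of_abs_le (abs_real_inner_le_norm (gz - gx) x)]
  have hgxt := mul_lt_mul_of_pos_left hgxa ht
  refine lt_of_mul_lt_mul_left ?_ ht.le
  linarith

theorem statement13_general
    {d : ℕ} {μ ν : Measure (Ed d)}
    [IsProbabilityMeasure ν]
    (hA : AssumptionA μ ν)
    (Λ : Set (Measure (Ed d)))
    (hΛ : ∀ β ∈ Λ, IsProbabilityMeasure β ∧ FiniteFirstMoment β ∧
      β ≪ (volume : Measure (Ed d)) ∧ (volume : Measure (Ed d)) ≪ β)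
    (htight : TightFamily Λ) :
    ∀ δ : ℝ, 0 < δ → ∃ M : ℝ, 0 < M ∧
      ∀ β ∈ Λ, ∀ v : Ed d → ℝ, ConvexOn ℝ Set.univ v →
        (∃ T : Ed d → Ed d, Measurable T ∧ (∀ᵐ x ∂β, HasGradientAt v (T x) x) ∧
          β.map T = ν) →
        ∀ z gz : Ed d, M ≤ ‖z‖ → HasGradientAt v gz z →
          gz ∈ mslice (convexHull ℝ (msupport ν)) (‖z‖⁻¹ • z) δ := by
  intro δ hδ
  set C := convexHull ℝ (msupport ν)
  obtain ⟨R, hR⟩ := hA.cptC.isBounded.exists_norm_le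
  have hnull : ν Cᶜ = 0 := measure_mono_null (compl_subset_compl.2 (subset_convexHull ℝ _))
    (msupport_eq_support ν ▸ Measure.measure_compl_support)
  have hne : (msupport ν).Nonempty :=
    msupport_eq_support ν ▸ Measure.nonempty_support (IsProbabilityMeasure.ne_zero ν)
  obtain ⟨ε, hε, hεS⟩ := exists_pos_le_measure_mslice hne hR hnull (half_pos hδ)
  obtain ⟨K, hK, hKε⟩ := htight.exists_isCompact_measure_compl_lt hε
  obtain ⟨r, hr⟩ := hK.isBounded.exists_norm_le
  refine ⟨max 1 (4 * R * r / δ), lt_max_of_lt_left one_pos, ?_⟩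
  rintro β hβ v hv ⟨T, hTm, hTgrad, hTν⟩ z gz hz hgz
  have hzpos : 0 < ‖z‖ := one_pos.trans_le ((le_max_left _ _).trans hz)
  have hTC : ∀ᵐ x ∂β, T x ∈ C := ae_of_ae_map hTm.aemeasurable (hTν ▸ mem_ae_iff.2 hnull)
  have hdense : Dense {x | ∃ g ∈ C, HasGradientAt v g x} :=
    Measure.dense_of_ae ((hΛ β hβ).2.2.2.ae_le
      ((hTgrad.and hTC).mono fun x hx => ⟨T x, hx.2, hx.1⟩))
  have hgzC : gz ∈ C :=
    hv.gradient_mem_of_dense (convex_convexHull ℝ _) hA.cptC.isClosed hR hdense hgz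
  set a := ‖z‖⁻¹ • z
  have hS : β (T ⁻¹' mslice C a (δ / 2)) = ν (mslice C a (δ / 2)) := by
    rw [← hTν, Measure.map_apply hTm (hA.cptC.isClosed.measurableSet_mslice a _)]
  obtain ⟨x, ⟨hxS, hxK⟩, hxgrad⟩ := exists_mem_inter_of_measure_compl_lt hTgrad
    ((hKε β hβ).trans_le ((hεS a (norm_smul_inv_norm (norm_pos_iff.1 hzpos))).trans hS.ge))
  refine ⟨hgzC, hv.sub_lt_inner_gradient_of_far (t := ‖z‖) ?_ hxgrad (hR gz hgzC) (hR _ hxS.1)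
    (hr x hxK) hzpos ((div_le_iff₀' hδ).1 ((le_max_right _ _).trans hz)) hxS.2⟩
  rwa [smul_inv_smul₀ hzpos.ne']

/-- Lemma 3.6 / `lem:Brenier boundary`. Let `Λ ⊆ 𝒫₁(ℝ^d)` be a tight
family of measures equivalent to Lebesgue measure and, for `β ∈ Λ`, let `∇v_β` be the
Brenier map from `β` to `ν`. Under Assumption (A), for every `δ > 0` there is
`M = M(ν,Λ,δ) > 0` such that `|z| ≥ M` implies `∇v_β(z) ∈ S_{z/|z|, δ}` for all `β ∈ Λ`
(at every point `z` where the Brenier potential is differentiable). -/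
theorem statement13
    {d : ℕ} {μ ν : Measure (Ed d)}
    [IsProbabilityMeasure μ] [IsProbabilityMeasure ν]
    (hspan : affineSpan ℝ (convexHull ℝ (msupport ν)) = ⊤)
    (hA : AssumptionA μ ν)
    (Λ : Set (Measure (Ed d)))
    (hΛ : ∀ β ∈ Λ, IsProbabilityMeasure β ∧ FiniteFirstMoment β ∧
      β ≪ (volume : Measure (Ed d)) ∧ (volume : Measure (Ed d)) ≪ β)
    (htight : TightFamily Λ) :
    ∀ δ : ℝ, 0 < δ → ∃ M : ℝ, 0 < M ∧
      ∀ β ∈ Λ, ∀ v : Ed d → ℝ, ConvexOn ℝ Set.univ v →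
        (∃ T : Ed d → Ed d, Measurable T ∧ (∀ᵐ x ∂β, HasGradientAt v (T x) x) ∧
          β.map T = ν) →
        ∀ z gz : Ed d, M ≤ ‖z‖ → HasGradientAt v gz z →
          gz ∈ mslice (convexHull ℝ (msupport ν)) (‖z‖⁻¹ • z) δ :=
  statement13_general hA Λ hΛ htight

end
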